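/- Let (θ_n)_{n≥0} be an inexact BCD-PR output satisfying Assumptions (A2) and (A3). Then the set of iterates { θ_n : n ≥ 1 } is bounded. -/

import Mathlib

/-!
BCD-PR: boundedness of the iterates.
-/

noncomputable section

open scoped RealInnerProductSpace

namespace BCD6

/-- The `i`-th block space `ℝ^{I_i}`. -/
abbrev Blk {m : ℕ} (I : Fin m → ℕ) (i : Fin m) : Type := EuclideanSpace ℝ (Fin (I i))

/-- The full parameter space `ℝ^{I_1 + ⋯ + I_m}`, as an ℓ²-product of the blocks. -/
abbrev Full {m : ℕ} (I : Fin m → ℕ) : Type := PiLp 2 (fun i : Fin m => EuclideanSpace ℝ (Fin (I i)))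

/-- The point whose blocks `j < i` come from `a`, block `i` is `x`, and blocks `j > i`
come from `b`. -/
def mixUpd {m : ℕ} {I : Fin m → ℕ} (a b : Full I) (i : Fin m) (x : Blk I i) : Full I :=
  WithLp.toLp 2 (Function.update (fun j => if j < i then a j else b j) i x)

/-- The marginal loss `f_n^{(i)}(x) = f(θ_n^{(1)},…,θ_n^{(i-1)}, x, θ_{n-1}^{(i+1)},…)`. -/
def fb {m : ℕ} {I : Fin m → ℕ} (f : Full I → ℝ) (θ : ℕ → Full I) (n : ℕ) (i : Fin m)
    (x : Blk I i) : ℝ :=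
  f (mixUpd (θ n) (θ (n - 1)) i x)

/-- The proximally regularized marginal loss
`g_n^{(i)}(x) = f_n^{(i)}(x) + (τ_n^{(i)}/2)‖x - θ_{n-1}^{(i)}‖²`. -/
def gb {m : ℕ} {I : Fin m → ℕ} (f : Full I → ℝ) (θ : ℕ → Full I) (τ : ℕ → Fin m → ℝ)
    (n : ℕ) (i : Fin m) (x : Blk I i) : ℝ :=
  fb f θ n i x + τ n i / 2 * ‖x - θ (n - 1) i‖ ^ 2

/-- The optimality gap `Δ_n = max_i ( g_n^{(i)}(θ_n^{(i)}) - inf_{Θ^{(i)}} g_n^{(i)} )`. -/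
def gap {m : ℕ} {I : Fin m → ℕ} (f : Full I → ℝ) (θ : ℕ → Full I)
    (S : ∀ i : Fin m, Set (Blk I i)) (τ : ℕ → Fin m → ℝ) (n : ℕ) : ℝ :=
  ⨆ i, (gb f θ τ n i (θ n i) - sInf (gb f θ τ n i '' S i))

/-!
Comparing the inexact proximal step on block `i` with the competitor `θ_{n-1}^{(i)}`, whose
proximal term vanishes, shows that each block update raises `f` by at most `Δ_n`; hence
`f θ_n ≤ f θ_{n-1} + m Δ_n`. Summing, every `f θ_n` is at most `f θ_0 + m ∑ Δ_k < ∞`, so all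
iterates lie in one sublevel set, which is compact by (A2).
-/

variable {m : ℕ} {I : Fin m → ℕ}

def blockSplice (a b : Full I) (k : ℕ) : Full I :=
  WithLp.toLp 2 (fun j => if (j : ℕ) < k then a j else b j)

lemma blockSplice_zero (a b : Full I) : blockSplice a b 0 = b := by
  ext1 j; simp [blockSplice]

lemma blockSplice_of_le (a b : Full I) {k : ℕ} (hk : m ≤ k) : blockSplice a b k = a := by
  ext1 j; simp [blockSplice, j.isLt.trans_le hk]

lemma mixUpd_right_eq_blockSplice (a b : Full I) (i : Fin m) :
    mixUpd a b i (b i) = blockSplice a b i := by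
  ext1 j
  by_cases h : j = i
  · subst h; simp [mixUpd, blockSplice]
  · simp only [mixUpd, blockSplice, Function.update_of_ne h, Fin.lt_def]

lemma mixUpd_left_eq_blockSplice (a b : Full I) (i : Fin m) :
    mixUpd a b i (a i) = blockSplice a b (i + 1) := by
  ext1 j
  by_cases h : j = i
  · subst h; simp [mixUpd, blockSplice]
  · have hiff : (j : ℕ) < i ↔ (j : ℕ) < i + 1 := by
      have : (j : ℕ) ≠ i := Fin.val_ne_of_ne h
      omega
    simp only [mixUpd, blockSplice, Function.update_of_ne h, Fin.lt_def, hiff]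

theorem le_add_mul_of_blockwise_le {f : Full I → ℝ} {a b : Full I} {ε : ℝ}
    (h : ∀ i, f (mixUpd a b i (a i)) ≤ f (mixUpd a b i (b i)) + ε) :
    f a ≤ f b + m * ε := by
  have splice : ∀ k ≤ m, f (blockSplice a b k) ≤ f b + k * ε := by
    intro k
    induction k with
    | zero => intro; simp [blockSplice_zero]
    | succ k ih =>
      intro hk
      have hblock := h ⟨k, hk⟩
      rw [mixUpd_left_eq_blockSplice, mixUpd_right_eq_blockSplice] at hblock
      have := ih (Nat.le_of_succ_le hk)
      push_cast
      linarith
  simpa [blockSplice_of_le] using splice m le_rfl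

section Step

variable {f : Full I → ℝ} {θ : ℕ → Full I} {S : ∀ i : Fin m, Set (Blk I i)}
  {τ : ℕ → Fin m → ℝ} {n : ℕ} {i : Fin m}

lemma gb_nonneg (hf0 : ∀ x, 0 ≤ f x) (hτ : 0 ≤ τ n i) (x : Blk I i) :
    0 ≤ gb f θ τ n i x :=
  add_nonneg (hf0 _) (by positivity)

lemma fb_le_gb (hτ : 0 ≤ τ n i) (x : Blk I i) : fb f θ n i x ≤ gb f θ τ n i x :=
  le_add_of_nonneg_right (by positivity)

lemma gb_apply_prev : gb f θ τ n i (θ (n - 1) i) = fb f θ n i (θ (n - 1) i) := by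
  simp [gb]

lemma sInf_gb_le (hf0 : ∀ x, 0 ≤ f x) (hτ : 0 ≤ τ n i) {x : Blk I i} (hx : x ∈ S i) :
    sInf (gb f θ τ n i '' S i) ≤ gb f θ τ n i x :=
  csInf_le ⟨0, by rintro _ ⟨y, -, rfl⟩; exact gb_nonneg hf0 hτ y⟩ ⟨x, hx, rfl⟩

lemma gb_sub_sInf_le_gap (i : Fin m) :
    gb f θ τ n i (θ n i) - sInf (gb f θ τ n i '' S i) ≤ gap f θ S τ n :=
  le_ciSup (f := fun j => gb f θ τ n j (θ n j) - sInf (gb f θ τ n j '' S j))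
    (Set.finite_range _).bddAbove i

lemma gap_nonneg (hf0 : ∀ x, 0 ≤ f x) (hτ : ∀ i, 0 ≤ τ n i) (hθ : ∀ i, θ n i ∈ S i) :
    0 ≤ gap f θ S τ n :=
  Real.iSup_nonneg fun i => sub_nonneg.2 (sInf_gb_le hf0 (hτ i) (hθ i))

lemma fb_le_fb_prev_add_gap (hf0 : ∀ x, 0 ≤ f x) (hτ : 0 ≤ τ n i)
    (hθ : θ (n - 1) i ∈ S i) :
    fb f θ n i (θ n i) ≤ fb f θ n i (θ (n - 1) i) + gap f θ S τ n := by
  have hinf : sInf (gb f θ τ n i '' S i) ≤ fb f θ n i (θ (n - 1) i) :=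
    gb_apply_prev (τ := τ) ▸ sInf_gb_le hf0 hτ hθ
  have hgap : gb f θ τ n i (θ n i) - sInf (gb f θ τ n i '' S i) ≤ gap f θ S τ n :=
    gb_sub_sInf_le_gap i
  linarith [fb_le_gb (f := f) (θ := θ) hτ (θ n i)]

theorem f_le_f_prev_add_mul_gap (hf0 : ∀ x, 0 ≤ f x) (hτ : ∀ i, 0 ≤ τ n i)
    (hθ : ∀ i, θ (n - 1) i ∈ S i) :
    f (θ n) ≤ f (θ (n - 1)) + m * gap f θ S τ n :=
  le_add_mul_of_blockwise_le fun i => fb_le_fb_prev_add_gap hf0 (hτ i) (hθ i)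

end Step

lemma le_add_tsum_of_le_add {u d : ℕ → ℝ} (hd : ∀ n, 0 ≤ d n) (hsum : Summable d)
    (hu : ∀ n, u (n + 1) ≤ u n + d n) (n : ℕ) : u n ≤ u 0 + ∑' k, d k := by
  have partialBound : u n ≤ u 0 + ∑ k ∈ Finset.range n, d k := by
    induction n with
    | zero => simp
    | succ n ih => rw [Finset.sum_range_succ]; linarith [hu n]
  linarith [hsum.sum_le_tsum (Finset.range n) fun k _ => hd k]

theorem stmt6_general {m : ℕ} {I : Fin m → ℕ}
    (S : ∀ i : Fin m, Set (Blk I i))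
    (f : Full I → ℝ) (hf0 : ∀ x, 0 ≤ f x)
    -- (A2): compact sublevel sets
    (hA2 : ∀ a : ℝ, IsCompact {x : Full I | (∀ i, x i ∈ S i) ∧ f x ≤ a})
    (τ : ℕ → Fin m → ℝ) (hτ : ∀ n i, 0 < τ n i)
    (θ : ℕ → Full I) (hθ : ∀ n i, θ n i ∈ S i)
    -- (A3): summable optimality gaps
    (hA3 : Summable (fun n : ℕ => gap f θ S τ (n + 1))) :
    Bornology.IsBounded (Set.range (fun n : ℕ => θ (n + 1))) := by
  set d : ℕ → ℝ := fun n => m * gap f θ S τ (n + 1)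
  have hd : ∀ n, 0 ≤ d n := fun n =>
    mul_nonneg m.cast_nonneg (gap_nonneg hf0 (fun i => (hτ _ i).le) (hθ _))
  have descent : ∀ n, f (θ (n + 1)) ≤ f (θ n) + d n := fun n =>
    f_le_f_prev_add_mul_gap hf0 (fun i => (hτ _ i).le) (hθ n)
  have bound := le_add_tsum_of_le_add (u := fun n => f (θ n)) hd (hA3.mul_left (m : ℝ)) descent
  refine (hA2 (f (θ 0) + ∑' k, d k)).isBounded.subset ?_
  rintro _ ⟨n, rfl⟩
  exact ⟨hθ _, bound _⟩

/-- **Boundedness of iterates.** Under (A2) and (A3), the set `{θ_n : n ≥ 1}` is bounded. -/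
theorem stmt6 {m : ℕ} (hm : 0 < m) {I : Fin m → ℕ}
    (S : ∀ i : Fin m, Set (Blk I i))
    (hSne : ∀ i, (S i).Nonempty) (hSconv : ∀ i, Convex ℝ (S i))
    (f : Full I → ℝ) (hf : ContDiff ℝ 1 f) (hf0 : ∀ x, 0 ≤ f x)
    -- (A2): compact sublevel sets
    (hA2 : ∀ a : ℝ, IsCompact {x : Full I | (∀ i, x i ∈ S i) ∧ f x ≤ a})
    (τ : ℕ → Fin m → ℝ) (hτ : ∀ n i, 0 < τ n i)
    (θ : ℕ → Full I) (hθ : ∀ n i, θ n i ∈ S i)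
    -- (A3): summable optimality gaps
    (hA3 : Summable (fun n : ℕ => gap f θ S τ (n + 1))) :
    Bornology.IsBounded (Set.range (fun n : ℕ => θ (n + 1))) :=
  stmt6_general S f hf0 hA2 τ hτ θ hθ hA3

end BCD6
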